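/- The interval decomposition of a persistence module is unique: if a persistence module of length n over a field k, with all vector spaces finite-dimensional, is isomorphic both to the direct sum of interval modules I[a,b] indexed by a finite multiset S of pairs (a,b) and to the direct sum indexed by a finite multiset T of pairs (a,b), then S = T as multisets of intervals. -/

import Mathlib

/-!
STATEMENT 1: The interval decomposition of a persistence module is unique: if a
persistence module of length `n` over a field `k`, with all vector spaces
finite-dimensional, is isomorphic both to the direct sum of interval modules `I[a,b]`
indexed by a finite multiset `S` of pairs `(a,b)` and to the direct sum indexed by a
finite multiset `T` of pairs `(a,b)`, then `S = T` as multisets of intervals.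

Finite multisets of intervals are encoded by finite index types `ι` together with a
function `ι → ℕ × ℕ`; the corresponding multiset is the image of `Finset.univ.val`.
-/

open DirectSum

/-- The `i`-th space of the interval module `I[a,b]`, realized as a submodule of `k`:
it is all of `k` (i.e. `⊤`) for `a ≤ i ≤ b` and the zero submodule otherwise. -/
def intervalSubmodule (k : Type*) [Field k] (a b i : ℕ) : Submodule k k :=
  if a ≤ i ∧ i ≤ b then ⊤ else ⊥

open Classical in
/-- The structure map of the interval module `I[a,b]` from index `i` to index `j`:
the (identity-like) inclusion whenever it exists, and zero otherwise.  For `j = i + 1`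
this is the identity of `k` when `a ≤ i < b` (both spaces being `⊤`) and zero otherwise. -/
noncomputable def intervalStep (k : Type*) [Field k] (a b i j : ℕ) :
    intervalSubmodule k a b i →ₗ[k] intervalSubmodule k a b j :=
  if h : intervalSubmodule k a b i ≤ intervalSubmodule k a b j then Submodule.inclusion h
  else 0

/-- The direct sum of a family of linear maps, as a map between direct sums. -/
noncomputable def dsumMap {k : Type*} [Field k] {ι : Type*} [DecidableEq ι]
    {M N : ι → Type*} [∀ x, AddCommGroup (M x)] [∀ x, Module k (M x)]
    [∀ x, AddCommGroup (N x)] [∀ x, Module k (N x)]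
    (f : ∀ x, M x →ₗ[k] N x) : (⨁ x, M x) →ₗ[k] ⨁ x, N x :=
  DirectSum.toModule k ι _ fun x => (DirectSum.lof k ι N x).comp (f x)

/-- `IsIntervalDecomposition k n V φ ab` says that the persistence module `(V, φ)` of
length `n` is isomorphic, as a persistence module, to the direct sum of the interval
modules `I[(ab x).1, (ab x).2]`, `x : ι`, all of whose intervals satisfy `a ≤ b ≤ n`. -/
def IsIntervalDecomposition (k : Type) [Field k] (n : ℕ)
    (V : Fin (n + 1) → Type) [∀ i, AddCommGroup (V i)] [∀ i, Module k (V i)]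
    (φ : ∀ i : Fin n, V i.castSucc →ₗ[k] V i.succ)
    {ι : Type} [Fintype ι] [DecidableEq ι] (ab : ι → ℕ × ℕ) : Prop :=
  (∀ x, (ab x).1 ≤ (ab x).2) ∧ (∀ x, (ab x).2 ≤ n) ∧
  ∃ e : ∀ i : Fin (n + 1),
      V i ≃ₗ[k] ⨁ x : ι, intervalSubmodule k (ab x).1 (ab x).2 (i : ℕ),
    ∀ (i : Fin n) (v : V i.castSucc),
      e i.succ (φ i v) =
        dsumMap (fun x => intervalStep k (ab x).1 (ab x).2 (i : ℕ) ((i : ℕ) + 1))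
          (e i.castSucc v)

/-!
The rank of the composite structure map `V i → V j` is invariant under isomorphism, and for
a direct sum of interval modules it counts the bars `[a, b]` with `a ≤ i` and `j ≤ b`. These
counts determine the multiplicity of every bar `[a, b]`: taking a difference in `j` counts
the bars born by `i` that die exactly at `j`, and a further difference in `i` isolates
those born exactly at `a`.
-/

section IntervalModule

variable {k : Type*} [Field k] {a b i j m : ℕ}

theorem mem_intervalSubmodule {x : k} :
    x ∈ intervalSubmodule k a b i ↔ (a ≤ i ∧ i ≤ b) ∨ x = 0 := by
  unfold intervalSubmodule
  split_ifs with h <;> simp [h]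

theorem coe_intervalStep_apply (hij : i ≤ j) (v : intervalSubmodule k a b i) :
    (intervalStep k a b i j v : k) = if a ≤ i ∧ j ≤ b then (v : k) else 0 := by
  unfold intervalStep
  split_ifs with hle hbar hbar
  · rfl
  · rcases mem_intervalSubmodule.1 v.2 with hi | hv
    · have h1 := mem_intervalSubmodule.1 (hle (mem_intervalSubmodule.2 (.inl hi) : (1 : k) ∈ _))
      simp only [one_ne_zero, or_false] at h1
      omega
    · exact hv
  · exact absurd (fun x _ => mem_intervalSubmodule.2 (.inl ⟨by omega, hbar.2⟩)) hle
  · rfl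

theorem intervalStep_self : intervalStep k a b i i = LinearMap.id := by
  rw [intervalStep, dif_pos le_rfl]
  rfl

theorem intervalStep_comp (him : i ≤ m) (hmj : m ≤ j) :
    intervalStep k a b m j ∘ₗ intervalStep k a b i m = intervalStep k a b i j := by
  refine LinearMap.ext fun v => Subtype.ext ?_
  simp only [LinearMap.comp_apply, coe_intervalStep_apply, him, hmj, him.trans hmj]
  split_ifs <;> first | rfl | omega

theorem finrank_range_intervalStep (hij : i ≤ j) :
    Module.finrank k (LinearMap.range (intervalStep k a b i j)) =
      if a ≤ i ∧ j ≤ b then 1 else 0 := by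
  split_ifs with hbar
  · have hinj : Function.Injective (intervalStep k a b i j) := fun v w hvw => by
      have hval := congrArg Subtype.val hvw
      rw [coe_intervalStep_apply hij, coe_intervalStep_apply hij, if_pos hbar, if_pos hbar] at hval
      exact Subtype.ext hval
    rw [LinearMap.finrank_range_of_inj hinj, intervalSubmodule, if_pos ⟨hbar.1, by omega⟩,
      finrank_top, Module.finrank_self]
  · have hzero : intervalStep k a b i j = 0 :=
      LinearMap.ext fun v => Subtype.ext (by simp [coe_intervalStep_apply hij, hbar])
    rw [hzero, LinearMap.range_zero, finrank_bot]

end IntervalModule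

theorem dsumMap_eq_lmap {k : Type*} [Field k] {ι : Type*} [DecidableEq ι]
    {M N : ι → Type*} [∀ x, AddCommGroup (M x)] [∀ x, Module k (M x)]
    [∀ x, AddCommGroup (N x)] [∀ x, Module k (N x)] (f : ∀ x, M x →ₗ[k] N x) :
    dsumMap f = DirectSum.lmap f := by
  refine DirectSum.linearMap_ext k fun x => LinearMap.ext fun m => ?_
  rw [LinearMap.comp_apply, LinearMap.comp_apply, dsumMap, DirectSum.toModule_lof,
    DirectSum.lmap_lof]
  rfl

theorem DirectSum.finrank_range_lmap {K : Type*} [DivisionRing K] {ι : Type*} [Fintype ι]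
    {M N : ι → Type*} [∀ x, AddCommGroup (M x)] [∀ x, Module K (M x)]
    [∀ x, AddCommGroup (N x)] [∀ x, Module K (N x)] [∀ x, FiniteDimensional K (M x)]
    (f : ∀ x, M x →ₗ[K] N x) :
    Module.finrank K (LinearMap.range (lmap f)) =
      ∑ x, Module.finrank K (LinearMap.range (f x)) := by
  have hfactor : lmap f = lmap (fun x => (LinearMap.range (f x)).subtype) ∘ₗ
      lmap (fun x => (f x).rangeRestrict) := by
    rw [← lmap_comp]
    rfl
  rw [hfactor, LinearMap.range_comp_of_range_eq_top _ (LinearMap.range_eq_top.2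
      ((lmap_surjective _).2 fun x => (f x).surjective_rangeRestrict)),
    LinearMap.finrank_range_of_inj ((lmap_injective _).2 fun x => Submodule.injective_subtype _),
    Module.finrank_directSum]

theorem LinearMap.finrank_range_eq_of_comp_eq {R : Type*} [Ring R]
    {M M' N N' : Type*} [AddCommGroup M] [Module R M] [AddCommGroup M'] [Module R M']
    [AddCommGroup N] [Module R N] [AddCommGroup N'] [Module R N']
    {f : M →ₗ[R] N} {g : M' →ₗ[R] N'} (e₁ : M ≃ₗ[R] M') (e₂ : N ≃ₗ[R] N')
    (h : e₂.toLinearMap ∘ₗ f = g ∘ₗ e₁.toLinearMap) :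
    Module.finrank R (range f) = Module.finrank R (range g) := by
  rw [← e₂.finrank_map_eq, ← range_comp, h, range_comp_of_range_eq_top _ e₁.range]

theorem Multiset.card_filter_eq_add_of_iff_or {α : Type*} {s : Multiset α} {p q r : α → Prop}
    [DecidablePred p] [DecidablePred q] [DecidablePred r]
    (hpqr : ∀ x, p x ↔ q x ∨ r x) (hqr : ∀ x, ¬(q x ∧ r x)) :
    card (s.filter p) = card (s.filter q) + card (s.filter r) := by
  rw [← card_add, filter_add_filter, filter_congr fun x _ => hpqr x,
    filter_eq_nil.2 fun x _ => hqr x, add_zero]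

def barcodeRank (S : Multiset (ℕ × ℕ)) (i j : ℕ) : ℕ :=
  Multiset.card (S.filter fun p => p.1 ≤ i ∧ j ≤ p.2)

theorem barcodeRank_eq_zero {S : Multiset (ℕ × ℕ)} {i j : ℕ} (hS : ∀ p ∈ S, p.2 < j) :
    barcodeRank S i j = 0 := by
  rw [barcodeRank, Multiset.card_eq_zero, Multiset.filter_eq_nil]
  exact fun p hp hij => (hS p hp).not_ge hij.2

theorem eq_of_barcodeRank_eq {S T : Multiset (ℕ × ℕ)} (hS : ∀ p ∈ S, p.1 ≤ p.2)
    (hT : ∀ p ∈ T, p.1 ≤ p.2)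
    (h : ∀ i j, i ≤ j → barcodeRank S i j = barcodeRank T i j) :
    S = T := by
  have dies_at (U : Multiset (ℕ × ℕ)) (i j : ℕ) : barcodeRank U i j =
      Multiset.card (U.filter fun p => p.1 < i + 1 ∧ p.2 = j) + barcodeRank U i (j + 1) :=
    Multiset.card_filter_eq_add_of_iff_or (fun p => by omega) (fun p => by omega)
  have born_before_dies_at (i j : ℕ) (hij : i ≤ j + 1) :
      Multiset.card (S.filter fun p => p.1 < i ∧ p.2 = j) =
        Multiset.card (T.filter fun p => p.1 < i ∧ p.2 = j) := by
    cases i with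
    | zero => simp
    | succ i =>
      linarith [dies_at S i j, dies_at T i j, h i j (by omega), h i (j + 1) (by omega)]
  ext ⟨a, b⟩
  by_cases hab : a ≤ b
  · have born_at (U : Multiset (ℕ × ℕ)) :
        Multiset.card (U.filter fun p => p.1 < a + 1 ∧ p.2 = b) =
          U.count (a, b) + Multiset.card (U.filter fun p => p.1 < a ∧ p.2 = b) := by
      rw [Multiset.count_eq_card_filter_eq]
      exact Multiset.card_filter_eq_add_of_iff_or (fun p => by rw [Prod.ext_iff]; omega)
        (fun p => by rw [Prod.ext_iff]; omega)
    linarith [born_at S, born_at T, born_before_dies_at a b (by omega),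
      born_before_dies_at (a + 1) b (by omega)]
  · rw [Multiset.count_eq_zero.2 fun hp => hab (hS _ hp),
      Multiset.count_eq_zero.2 fun hp => hab (hT _ hp)]

section PersistenceModule

variable {k : Type} [Field k] {n : ℕ}
  {V : Fin (n + 1) → Type} [∀ i, AddCommGroup (V i)] [∀ i, Module k (V i)]
  (φ : ∀ i : Fin n, V i.castSucc →ₗ[k] V i.succ)

def transitionMap (i : ℕ) :
    ∀ d, (hd : i + d ≤ n) → V ⟨i, by omega⟩ →ₗ[k] V ⟨i + d, by omega⟩
  | 0, _ => LinearMap.id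
  | d + 1, hd => φ ⟨i + d, by omega⟩ ∘ₗ transitionMap i d (by omega)

variable {φ} {ι : Type} [DecidableEq ι] {ab : ι → ℕ × ℕ}

theorem transitionMap_naturality
    (e : ∀ i : Fin (n + 1),
      V i ≃ₗ[k] ⨁ x : ι, intervalSubmodule k (ab x).1 (ab x).2 (i : ℕ))
    (he : ∀ (i : Fin n) (v : V i.castSucc),
      e i.succ (φ i v) =
        dsumMap (fun x => intervalStep k (ab x).1 (ab x).2 (i : ℕ) ((i : ℕ) + 1))
          (e i.castSucc v))
    (i : ℕ) : ∀ d (hd : i + d ≤ n),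
      (e ⟨i + d, by omega⟩).toLinearMap ∘ₗ transitionMap φ i d hd =
        DirectSum.lmap (fun x => intervalStep k (ab x).1 (ab x).2 i (i + d)) ∘ₗ
          (e ⟨i, by omega⟩).toLinearMap
  | 0, _ => by simp [transitionMap, intervalStep_self]
  | d + 1, hd => by
    have hstep : (e ⟨i + (d + 1), by omega⟩).toLinearMap ∘ₗ φ ⟨i + d, by omega⟩ =
        DirectSum.lmap (fun x => intervalStep k (ab x).1 (ab x).2 (i + d) (i + d + 1)) ∘ₗ
          (e ⟨i + d, by omega⟩).toLinearMap :=
      LinearMap.ext fun v => (he ⟨i + d, by omega⟩ v).trans (by rw [dsumMap_eq_lmap]; rfl)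
    simp only [transitionMap]
    rw [← LinearMap.comp_assoc, hstep, LinearMap.comp_assoc,
      transitionMap_naturality e he i d (by omega), ← LinearMap.comp_assoc,
      ← DirectSum.lmap_comp]
    simp only [intervalStep_comp (Nat.le_add_right i d) (Nat.le_succ (i + d))]
    rfl

theorem IsIntervalDecomposition.finrank_range_transitionMap [Fintype ι]
    (h : IsIntervalDecomposition k n V φ ab) (i d : ℕ) (hd : i + d ≤ n) :
    Module.finrank k (LinearMap.range (transitionMap φ i d hd)) =
      barcodeRank (Multiset.map ab Finset.univ.val) i (i + d) := by
  obtain ⟨-, -, e, he⟩ := h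
  rw [LinearMap.finrank_range_eq_of_comp_eq _ _ (transitionMap_naturality e he i d hd),
    DirectSum.finrank_range_lmap]
  simp only [finrank_range_intervalStep (Nat.le_add_right i d)]
  rw [Finset.sum_boole, barcodeRank, Multiset.filter_map, Multiset.card_map]
  rfl

theorem IsIntervalDecomposition.le_of_mem [Fintype ι] (h : IsIntervalDecomposition k n V φ ab)
    {p : ℕ × ℕ} (hp : p ∈ Multiset.map ab Finset.univ.val) : p.1 ≤ p.2 ∧ p.2 ≤ n := by
  obtain ⟨x, -, rfl⟩ := Multiset.mem_map.1 hp
  exact ⟨h.1 x, h.2.1 x⟩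

end PersistenceModule

theorem persistence_module_interval_decomposition_unique_general
    (k : Type) [Field k] (n : ℕ)
    (V : Fin (n + 1) → Type) [∀ i, AddCommGroup (V i)] [∀ i, Module k (V i)]
    (φ : ∀ i : Fin n, V i.castSucc →ₗ[k] V i.succ)
    {ι₁ ι₂ : Type} [Fintype ι₁] [DecidableEq ι₁] [Fintype ι₂] [DecidableEq ι₂]
    (ab₁ : ι₁ → ℕ × ℕ) (ab₂ : ι₂ → ℕ × ℕ)
    (h₁ : IsIntervalDecomposition k n V φ ab₁)
    (h₂ : IsIntervalDecomposition k n V φ ab₂) :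
    Multiset.map ab₁ Finset.univ.val = Multiset.map ab₂ Finset.univ.val := by
  refine eq_of_barcodeRank_eq (fun p hp => (h₁.le_of_mem hp).1)
    (fun p hp => (h₂.le_of_mem hp).1) fun i j hij => ?_
  obtain ⟨d, rfl⟩ := Nat.exists_eq_add_of_le hij
  by_cases hd : i + d ≤ n
  · rw [← h₁.finrank_range_transitionMap i d hd, h₂.finrank_range_transitionMap i d hd]
  · rw [barcodeRank_eq_zero fun p hp => by have := (h₁.le_of_mem hp).2; omega,
      barcodeRank_eq_zero fun p hp => by have := (h₂.le_of_mem hp).2; omega]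

/-- **Uniqueness of the interval decomposition.**  If a pointwise finite-dimensional
persistence module `(V, φ)` of length `n` decomposes into interval modules indexed by
`(ι₁, ab₁)` and also by `(ι₂, ab₂)`, then the corresponding multisets of intervals
coincide. -/
theorem persistence_module_interval_decomposition_unique
    (k : Type) [Field k] (n : ℕ)
    (V : Fin (n + 1) → Type) [∀ i, AddCommGroup (V i)] [∀ i, Module k (V i)]
    [∀ i, FiniteDimensional k (V i)]
    (φ : ∀ i : Fin n, V i.castSucc →ₗ[k] V i.succ)
    {ι₁ ι₂ : Type} [Fintype ι₁] [DecidableEq ι₁] [Fintype ι₂] [DecidableEq ι₂]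
    (ab₁ : ι₁ → ℕ × ℕ) (ab₂ : ι₂ → ℕ × ℕ)
    (h₁ : IsIntervalDecomposition k n V φ ab₁)
    (h₂ : IsIntervalDecomposition k n V φ ab₂) :
    Multiset.map ab₁ Finset.univ.val = Multiset.map ab₂ Finset.univ.val :=
  persistence_module_interval_decomposition_unique_general k n V φ ab₁ ab₂ h₁ h₂
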